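/- Among all real random variables with density and fixed variance σ² > 0, the Gaussian with variance σ² maximizes the differential entropy: for any real random variable X with density p and Var(X) = σ², H(X) := -∫ p log p ≤ (1/2) log(2π e σ²), with equality iff X is Gaussian. -/

import Mathlib

/-!
Gibbs' inequality: for densities `p ≥ 0` and `q > 0` of equal mass,
`p log p - p log q - (p - q) = q · klFun (p / q) ≥ 0` pointwise, so `∫ p log q ≤ ∫ p log p`, with
equality iff `p = q` a.e. Taking for `q` the Gaussian density with the same centre `m` and
second moment `σ²`, `log q` is a quadratic polynomial in `x`, so `∫ p log q` only depends on the
mass and the second moment of `p`; it equals `-(1/2) log (2 π e σ²)`.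
-/

open MeasureTheory Real InformationTheory ProbabilityTheory
open scoped NNReal

lemma mul_log_sub_mul_log_sub_sub_eq_mul_klFun {a b : ℝ} (hb : 0 < b) :
    a * log a - a * log b - (a - b) = b * klFun (a / b) := by
  rcases eq_or_ne a 0 with rfl | ha
  · simp [klFun]
  · rw [klFun, log_div ha hb.ne']
    field_simp
    ring

lemma mul_klFun_div_nonneg {a b : ℝ} (ha : 0 ≤ a) (hb : 0 < b) : 0 ≤ b * klFun (a / b) :=
  mul_nonneg hb.le (klFun_nonneg (div_nonneg ha hb.le))

section Gibbs

variable {α : Type*} [MeasurableSpace α] {μ : Measure α} {p q : α → ℝ}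

lemma integral_mul_log_sub_integral_mul_log_eq_integral_klFun (hq : ∀ x, 0 < q x)
    (hpi : Integrable p μ) (hqi : Integrable q μ) (hmass : ∫ x, p x ∂μ = ∫ x, q x ∂μ)
    (hpp : Integrable (fun x ↦ p x * log (p x)) μ) (hpq : Integrable (fun x ↦ p x * log (q x)) μ) :
    ∫ x, p x * log (p x) ∂μ - ∫ x, p x * log (q x) ∂μ = ∫ x, q x * klFun (p x / q x) ∂μ := by
  simp_rw [← mul_log_sub_mul_log_sub_sub_eq_mul_klFun (hq _)]
  have hdiff : Integrable (fun x ↦ p x * log (p x) - p x * log (q x)) μ := hpp.sub hpq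
  have hmass_diff : Integrable (fun x ↦ p x - q x) μ := hpi.sub hqi
  rw [integral_sub hdiff hmass_diff, integral_sub hpp hpq, integral_sub hpi hqi, hmass,
    sub_self, sub_zero]

lemma integrable_mul_klFun_div (hq : ∀ x, 0 < q x)
    (hpi : Integrable p μ) (hqi : Integrable q μ)
    (hpp : Integrable (fun x ↦ p x * log (p x)) μ) (hpq : Integrable (fun x ↦ p x * log (q x)) μ) :
    Integrable (fun x ↦ q x * klFun (p x / q x)) μ := by
  simp_rw [← mul_log_sub_mul_log_sub_sub_eq_mul_klFun (hq _)]
  exact (hpp.sub hpq).sub (hpi.sub hqi)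

variable (hp : ∀ x, 0 ≤ p x) (hq : ∀ x, 0 < q x)
  (hpi : Integrable p μ) (hqi : Integrable q μ) (hmass : ∫ x, p x ∂μ = ∫ x, q x ∂μ)
  (hpp : Integrable (fun x ↦ p x * log (p x)) μ) (hpq : Integrable (fun x ↦ p x * log (q x)) μ)
include hp hq hpi hqi hmass hpp hpq

theorem integral_mul_log_le_integral_mul_log :
    ∫ x, p x * log (q x) ∂μ ≤ ∫ x, p x * log (p x) ∂μ := by
  have hdiff := integral_mul_log_sub_integral_mul_log_eq_integral_klFun hq hpi hqi hmass hpp hpq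
  have hdeficit : 0 ≤ ∫ x, q x * klFun (p x / q x) ∂μ :=
    integral_nonneg fun x ↦ mul_klFun_div_nonneg (hp x) (hq x)
  linarith

theorem integral_mul_log_eq_integral_mul_log_iff :
    ∫ x, p x * log (q x) ∂μ = ∫ x, p x * log (p x) ∂μ ↔ p =ᵐ[μ] q := by
  have hdiff := integral_mul_log_sub_integral_mul_log_eq_integral_klFun hq hpi hqi hmass hpp hpq
  have hpointwise : ∀ x, q x * klFun (p x / q x) = 0 ↔ p x = q x := fun x ↦ by
    rw [mul_eq_zero, klFun_eq_zero_iff (div_nonneg (hp x) (hq x).le), div_eq_one_iff_eq (hq x).ne']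
    simp [(hq x).ne']
  rw [eq_comm, ← sub_eq_zero, hdiff, integral_eq_zero_iff_of_nonneg (fun x ↦ mul_klFun_div_nonneg (hp x) (hq x))
    (integrable_mul_klFun_div hq hpi hqi hpp hpq)]
  exact Filter.eventually_congr (.of_forall hpointwise)

end Gibbs

section Gaussian

variable {m : ℝ} {v : ℝ≥0} {p : ℝ → ℝ}

lemma log_gaussianPDFReal (hv : v ≠ 0) (x : ℝ) :
    log (gaussianPDFReal m v x) = -(1 / 2) * log (2 * π * v) - (x - m) ^ 2 / (2 * v) := by
  have : (0 : ℝ) < v := by positivity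
  rw [gaussianPDFReal, log_mul (by positivity) (exp_pos _).ne', log_inv, log_sqrt (by positivity),
    log_exp]
  ring

lemma mul_log_gaussianPDFReal (hv : v ≠ 0) :
    (fun x ↦ p x * log (gaussianPDFReal m v x)) =
      fun x ↦ -(1 / 2) * log (2 * π * v) * p x - (2 * v : ℝ)⁻¹ * ((x - m) ^ 2 * p x) := by
  ext x
  rw [log_gaussianPDFReal hv]
  ring

variable (hv : v ≠ 0) (hpi : Integrable p) (hp2 : Integrable fun x ↦ (x - m) ^ 2 * p x)
include hv hpi hp2

lemma integrable_mul_log_gaussianPDFReal :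
    Integrable fun x ↦ p x * log (gaussianPDFReal m v x) := by
  rw [mul_log_gaussianPDFReal hv]
  exact (hpi.const_mul _).sub (hp2.const_mul _)

lemma integral_mul_log_gaussianPDFReal (hmass : ∫ x, p x = 1)
    (hvar : ∫ x, (x - m) ^ 2 * p x = v) :
    ∫ x, p x * log (gaussianPDFReal m v x) = -(1 / 2) * log (2 * π * exp 1 * v) := by
  have : (0 : ℝ) < v := by positivity
  rw [mul_log_gaussianPDFReal hv, integral_sub (hpi.const_mul _) (hp2.const_mul _),
    integral_const_mul, integral_const_mul, hmass, hvar, mul_right_comm _ (exp 1),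
    log_mul (by positivity) (exp_pos _).ne', log_exp]
  field_simp
  ring

end Gaussian

theorem gaussian_maximizes_differential_entropy_general
    (p : ℝ → ℝ) (hp_nonneg : ∀ x, 0 ≤ p x)
    (hp_int : (∫ x, p x) = 1)
    (m σ2 : ℝ) (hσ2 : 0 < σ2)
    (hvar : (∫ x, (x - m) ^ 2 * p x) = σ2)
    (hent : Integrable (fun x => p x * Real.log (p x))) :
    (-(∫ x, p x * Real.log (p x)) ≤ (1 / 2) * Real.log (2 * π * Real.exp 1 * σ2)) ∧
    ((-(∫ x, p x * Real.log (p x)) = (1 / 2) * Real.log (2 * π * Real.exp 1 * σ2)) ↔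
      p =ᵐ[volume] fun x =>
        (Real.sqrt (2 * π * σ2))⁻¹ * Real.exp (-(x - m) ^ 2 / (2 * σ2))) := by
  set v : ℝ≥0 := ⟨σ2, hσ2.le⟩
  have hv : v ≠ 0 := ne_of_gt hσ2
  have hpi : Integrable p := .of_integral_ne_zero (by simp [hp_int])
  have hp2 : Integrable fun x ↦ (x - m) ^ 2 * p x := .of_integral_ne_zero (hvar ▸ hσ2.ne')
  have hq : ∀ x, 0 < gaussianPDFReal m v x := (gaussianPDFReal_pos m v · hv)
  have hmass : ∫ x, p x = ∫ x, gaussianPDFReal m v x := by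
    rw [hp_int, integral_gaussianPDFReal_eq_one m hv]
  have hpq := integrable_mul_log_gaussianPDFReal hv hpi hp2
  have hcross : ∫ x, p x * log (gaussianPDFReal m v x) = -(1 / 2) * log (2 * π * exp 1 * σ2) :=
    integral_mul_log_gaussianPDFReal hv hpi hp2 hp_int hvar
  refine ⟨?_, ?_⟩
  · linarith [integral_mul_log_le_integral_mul_log hp_nonneg hq hpi
      (integrable_gaussianPDFReal m v) hmass hent hpq]
  · change _ ↔ p =ᵐ[volume] gaussianPDFReal m v
    rw [← integral_mul_log_eq_integral_mul_log_iff hp_nonneg hq hpi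
      (integrable_gaussianPDFReal m v) hmass hent hpq, hcross]
    constructor <;> intro h <;> linarith

/-- Among densities with fixed variance `σ² > 0`, the Gaussian maximizes differential
entropy: `H(X) ≤ (1/2) log (2 π e σ²)`, with equality iff the density is Gaussian. -/
theorem gaussian_maximizes_differential_entropy
    (p : ℝ → ℝ) (hp_meas : Measurable p) (hp_nonneg : ∀ x, 0 ≤ p x)
    (hp_int : (∫ x, p x) = 1)
    (m σ2 : ℝ) (hσ2 : 0 < σ2)
    (hmean : (∫ x, x * p x) = m)
    (hvar : (∫ x, (x - m) ^ 2 * p x) = σ2)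
    (hent : Integrable (fun x => p x * Real.log (p x))) :
    (-(∫ x, p x * Real.log (p x)) ≤ (1 / 2) * Real.log (2 * π * Real.exp 1 * σ2)) ∧
    ((-(∫ x, p x * Real.log (p x)) = (1 / 2) * Real.log (2 * π * Real.exp 1 * σ2)) ↔
      p =ᵐ[volume] fun x =>
        (Real.sqrt (2 * π * σ2))⁻¹ * Real.exp (-(x - m) ^ 2 / (2 * σ2))) :=
  gaussian_maximizes_differential_entropy_general p hp_nonneg hp_int m σ2 hσ2 hvar hent
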